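/- Corollary (I-link bottom endpoint avoids Λ-links). Let d ≥ 9, let s^4 be the syndrome of the error ε^4 on the toric lattice T_d, and let T_{i,q} be a decoding tree where the qubit q is incident to an unsatisfied check of s^4. If u — v is an I-link in T_{i,q} with v its bottom (deeper) endpoint, then v does not belong to any Λ-link of T_{i,q}. -/

import Mathlib

namespace ToricMS

/-- Checks of the toric lattice: vertices of the `d × d` torus grid. -/
abbrev V (d : ℕ) : Type := ZMod d × ZMod d

/-- The toric lattice `T_d`: two checks are adjacent iff their difference is
`(±1, 0)` or `(0, ±1)` mod `d` (for `d ≥ 3` the inequality clause is automatic). -/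
def Toric (d : ℕ) : SimpleGraph (V d) where
  Adj v w := v ≠ w ∧
    (v - w = (1, 0) ∨ v - w = (-1, 0) ∨ v - w = (0, 1) ∨ v - w = (0, -1))
  symm := ⟨by
    rintro v w ⟨hne, h⟩
    refine ⟨hne.symm, ?_⟩
    have hswap : w - v = -(v - w) := by ring
    rcases h with h | h | h | h <;> rw [hswap, h] <;> simp [Prod.ext_iff]⟩
  loopless := ⟨fun v h => h.1 rfl⟩

/-- Weight of an error: the number of qubits (edges) in error. -/
noncomputable def wt {d : ℕ} (e : (Toric d).edgeSet → ZMod 2) : ℕ :=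
  Nat.card {q : (Toric d).edgeSet // e q = 1}

/-- Syndrome of an error: mod-2 sum of the error over the qubits incident to each check. -/
noncomputable def synd {d : ℕ} (e : (Toric d).edgeSet → ZMod 2) : V d → ZMod 2 :=
  fun c => (Nat.card {q : (Toric d).edgeSet // e q = 1 ∧ c ∈ (q : Sym2 (V d))} : ZMod 2)

/-- A degenerate error: some different error of no larger weight has the same syndrome. -/
def Degenerate {d : ℕ} (e : (Toric d).edgeSet → ZMod 2) : Prop :=
  ∃ e' : (Toric d).edgeSet → ZMod 2, e' ≠ e ∧ wt e' ≤ wt e ∧ synd e' = synd e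

/-- The fake syndrome `s^c` having `c` as its only unsatisfied check. -/
def fakeS (d : ℕ) (c : V d) : V d → ZMod 2 := fun c' => if c' = c then 1 else 0

/-- The error `ε⁴` consisting of 4 consecutive collinear (horizontal) qubits. -/
def eps4 (d : ℕ) : (Toric d).edgeSet → ZMod 2 := fun q =>
  if q.val = s((((0 : ZMod d), (0 : ZMod d)) : V d), ((1, 0) : V d))
      ∨ q.val = s((((1 : ZMod d), (0 : ZMod d)) : V d), ((2, 0) : V d))
      ∨ q.val = s((((2 : ZMod d), (0 : ZMod d)) : V d), ((3, 0) : V d))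
      ∨ q.val = s((((3 : ZMod d), (0 : ZMod d)) : V d), ((4, 0) : V d))
  then 1 else 0

/-- Walk without return (wwr) in `T_d`, as its list of visited checks. -/
def IsWWR (d : ℕ) (l : List (V d)) : Prop :=
  l.Chain' (Toric d).Adj ∧ ∀ j : ℕ, j + 2 < l.length → l[j]? ≠ l[j + 2]?

/-- A walk starting with the root edge `e_q = {a, b}` (either orientation allowed). -/
def StartsQ (d : ℕ) (a b : V d) (l : List (V d)) : Prop :=
  l.take 2 = [a, b] ∨ l.take 2 = [b, a]

/-- Vertices of the decoding tree `T_{i,q}` (`q` the edge `{a,b}`): wwrs of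
length `1, …, i` starting with `e_q`, encoded by their check lists. -/
def IsTreeVertex (d : ℕ) (a b : V d) (i : ℕ) (l : List (V d)) : Prop :=
  IsWWR d l ∧ StartsQ d a b l ∧ 2 ≤ l.length ∧ l.length ≤ i + 1

/-- Edges of the decoding tree `T_{i,q}`: wwrs of length `1, …, i+1` starting with
`e_q` (an edge is identified with the wwr ending with it), where the root edge is
canonically represented by `[a, b]`. -/
def IsTreeEdge (d : ℕ) (a b : V d) (i : ℕ) (l : List (V d)) : Prop :=
  IsWWR d l ∧ StartsQ d a b l ∧ 2 ≤ l.length ∧ l.length ≤ i + 2 ∧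
    (l.length = 2 → l = [a, b])

/-- Dangling edges: tree edges at maximal depth, with a single endpoint in the tree. -/
def IsDangling (d : ℕ) (a b : V d) (i : ℕ) (l : List (V d)) : Prop :=
  IsTreeEdge d a b i l ∧ l.length = i + 2

/-- The check of `T_d` associated with a tree vertex. -/
def vcheck {d : ℕ} (l : List (V d)) : V d := l.getLastD 0

/-- Incidence between a tree vertex and a tree edge. -/
def IncidentVE {d : ℕ} (lv le : List (V d)) : Prop :=
  lv = le ∨ lv = le.dropLast ∨ (le.length = 2 ∧ lv = le.reverse)

/-- A configuration on the decoding tree for syndrome `s`: an edge labelling such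
that around every tree vertex, the mod-2 sum of the labels of the incident edges
equals the syndrome value of the associated check. -/
def IsConfig (d : ℕ) (a b : V d) (i : ℕ) (s : V d → ZMod 2)
    (C : List (V d) → ZMod 2) : Prop :=
  ∀ lv, IsTreeVertex d a b i lv →
    (Nat.card {le : List (V d) //
        IsTreeEdge d a b i le ∧ IncidentVE lv le ∧ C le = 1} : ZMod 2) = s (vcheck lv)

/-- Weight of a configuration: its number of labeled tree edges. -/
noncomputable def cweight (d : ℕ) (a b : V d) (i : ℕ) (C : List (V d) → ZMod 2) : ℕ :=
  Nat.card {le : List (V d) // IsTreeEdge d a b i le ∧ C le = 1}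

/-- Minimal weight of a configuration whose root edge has label `r`. -/
noncomputable def minW (d : ℕ) (a b : V d) (i : ℕ) (s : V d → ZMod 2) (r : ZMod 2) : ℕ :=
  sInf {n : ℕ | ∃ C : List (V d) → ZMod 2,
    IsConfig d a b i s C ∧ C [a, b] = r ∧ cweight d a b i C = n}

/-- A posteriori value of the (oriented) qubit `(a,b)` at iteration `i` computed by
min-sum (Wiberg): minimal root-labeled weight minus minimal root-unlabeled weight. -/
noncomputable def APPo (d : ℕ) (s : V d → ZMod 2) (i : ℕ) (a b : V d) : ℤ :=
  (minW d a b i s 1 : ℤ) - (minW d a b i s 0 : ℤ)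

/-- A posteriori value of a qubit (an unordered edge) at iteration `i`. -/
noncomputable def APP (d : ℕ) (s : V d → ZMod 2) (i : ℕ) : Sym2 (V d) → ℤ :=
  Sym2.lift ⟨fun a b => min (APPo d s i a b) (APPo d s i b a), fun _ _ => min_comm _ _⟩

/-- The MS hard-decision estimate at iteration `i`. -/
noncomputable def hatE (d : ℕ) (s : V d → ZMod 2) (i : ℕ) : (Toric d).edgeSet → ZMod 2 :=
  fun q => if APP d s i q.val < 0 then 1 else 0

/-- `s` is decoded by MS in `k` iterations: the estimate satisfies the syndrome at
iteration `k` and not before. -/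
def DecodedIn (d : ℕ) (s : V d → ZMod 2) (k : ℕ) : Prop :=
  1 ≤ k ∧ synd (hatE d s k) = s ∧ ∀ j, 1 ≤ j → j < k → synd (hatE d s j) ≠ s

/-- The error `e` is correctly decoded by MS. -/
def CorrectlyDecoded {d : ℕ} (e : (Toric d).edgeSet → ZMod 2) : Prop :=
  ∃ k, DecodedIn d (synd e) k ∧ hatE d (synd e) k = e

/-- Length of the longest common prefix of two lists. -/
def cpl {d : ℕ} : List (V d) → List (V d) → ℕ
  | x :: xs, y :: ys => if x = y then cpl xs ys + 1 else 0
  | _, _ => 0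

/-- Distance (number of edges of the connecting path) between two tree vertices. -/
def treeDist {d : ℕ} (lu lv : List (V d)) : ℕ :=
  if lu.take 2 = lv.take 2 then lu.length + lv.length - 2 * cpl lu lv
  else lu.length + lv.length - 3

/-- Strip a dangling edge down to its unique endpoint vertex. -/
def stripD {d : ℕ} (i : ℕ) (l : List (V d)) : List (V d) :=
  if l.length = i + 2 then l.dropLast else l

/-- `le` is an edge on the (unique) tree path between tree vertices `lu` and `lv`. -/
def OnPathVV {d : ℕ} (lu lv le : List (V d)) : Prop :=
  if lu.take 2 = lv.take 2 then (le <+: lu ∨ le <+: lv) ∧ cpl lu lv < le.length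
  else ((le <+: lu ∨ le <+: lv) ∧ 3 ≤ le.length) ∨ le.length = 2

/-- `lw` is a vertex on the (unique) tree path between tree vertices `lu` and `lv`. -/
def OnPathVertexVV {d : ℕ} (lu lv lw : List (V d)) : Prop :=
  if lu.take 2 = lv.take 2 then (lw <+: lu ∨ lw <+: lv) ∧ cpl lu lv ≤ lw.length
  else (lw <+: lu ∨ lw <+: lv) ∧ 2 ≤ lw.length

/-- A link of the decoding tree `T_{i,q}` for syndrome `s`: a path in the tree
whose vertex endpoints (if any) are associated with unsatisfied checks; an
endpoint is either a tree vertex or a dangling edge. -/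
structure Link (d : ℕ) (a b : V d) (i : ℕ) (s : V d → ZMod 2) where
  endA : List (V d)
  endB : List (V d)
  hA : IsTreeVertex d a b i endA ∨ IsDangling d a b i endA
  hB : IsTreeVertex d a b i endB ∨ IsDangling d a b i endB
  hAu : IsTreeVertex d a b i endA → s (vcheck endA) = 1
  hBu : IsTreeVertex d a b i endB → s (vcheck endB) = 1
  hne : endA ≠ endB

variable {d : ℕ} {a b : V d} {i : ℕ} {s : V d → ZMod 2}

/-- The tree edges lying on a link. -/
def Link.on (L : Link d a b i s) (le : List (V d)) : Prop :=
  OnPathVV (stripD i L.endA) (stripD i L.endB) le ∨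
    (L.endA.length = i + 2 ∧ le = L.endA) ∨ (L.endB.length = i + 2 ∧ le = L.endB)

/-- The length (number of edges) of a link. -/
def Link.len (L : Link d a b i s) : ℕ :=
  treeDist (stripD i L.endA) (stripD i L.endB) +
    (if L.endA.length = i + 2 then 1 else 0) + (if L.endB.length = i + 2 then 1 else 0)

/-- A proper link: both endpoints are (unsatisfied) tree vertices. -/
def Link.Proper (L : Link d a b i s) : Prop :=
  IsTreeVertex d a b i L.endA ∧ IsTreeVertex d a b i L.endB

/-- A labeled link (w.r.t. a configuration `C`): all its edges are labeled. -/
def Link.IsLabeled (L : Link d a b i s) (C : List (V d) → ZMod 2) : Prop :=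
  ∀ le, IsTreeEdge d a b i le → L.on le → C le = 1

/-- A maximal labeled link: it cannot be extended into a longer labeled link. -/
def Link.IsMaxLabeled (L : Link d a b i s) (C : List (V d) → ZMod 2) : Prop :=
  L.IsLabeled C ∧
    ∀ L' : Link d a b i s, L'.IsLabeled C → (∀ le, L.on le → L'.on le) → L'.len ≤ L.len

/-- An `I`-link: a proper link of length 4 not containing the root, descending
four levels of the tree. -/
def Link.IsI (L : Link d a b i s) : Prop :=
  L.Proper ∧ L.len = 4 ∧ ¬ L.on [a, b] ∧
    (L.endA.length + 4 = L.endB.length ∨ L.endB.length + 4 = L.endA.length)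

/-- A `Γ`-link: a proper link of length 4 not containing the root, going up one
level then down three. -/
def Link.IsGamma (L : Link d a b i s) : Prop :=
  L.Proper ∧ L.len = 4 ∧ ¬ L.on [a, b] ∧
    (L.endA.length + 2 = L.endB.length ∨ L.endB.length + 2 = L.endA.length)

/-- A `Λ`-link: a proper link of length 4 not containing the root, going up two
levels then down two (its endpoints are at the same depth). -/
def Link.IsLambda (L : Link d a b i s) : Prop :=
  L.Proper ∧ L.len = 4 ∧ ¬ L.on [a, b] ∧ L.endA.length = L.endB.length

/-- Distance of a tree vertex to the bottom: minimal length of a path starting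
at that vertex and ending with a dangling edge. -/
noncomputable def distToBottom (d : ℕ) (a b : V d) (i : ℕ) (lv : List (V d)) : ℕ :=
  sInf {n : ℕ | ∃ le, IsDangling d a b i le ∧ n = treeDist lv le.dropLast + 1}

/-- A walk in the decoding tree: a sequence of tree edges `es` together with the
sequence `vs` of tree vertices through which consecutive edges are traversed. -/
structure TreeWalk (d : ℕ) (a b : V d) (i : ℕ) where
  es : List (List (V d))
  vs : List (List (V d))
  hlen : vs.length + 1 = es.length
  hes : ∀ le ∈ es, IsTreeEdge d a b i le
  hvs : ∀ lv ∈ vs, IsTreeVertex d a b i lv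
  hinc : ∀ (j : ℕ) (hj : j < vs.length),
    IncidentVE (vs[j]'hj) (es[j]'(by omega)) ∧ IncidentVE (vs[j]'hj) (es[j + 1]'(by omega))
  htrav : ∀ (j : ℕ) (hj : j + 1 < vs.length), vs[j]'(by omega) ≠ vs[j + 1]'hj

/-- The four unit directions of the square lattice. -/
def dirVec (d : ℕ) : Fin 4 → V d := ![(1, 0), (0, 1), (-1, 0), (0, -1)]

/-- A rigid embedding of a patch `K` of `T_d` into `T_{d'}`: an injective map
which, up to a fixed symmetry `g` of the square (an element of the dihedral
group acting on the four directions), preserves the local square-lattice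
structure — hence it is an injective graph homomorphism mapping plaquettes to
plaquettes. -/
def IsRigidEmbed (d d' : ℕ) (K : Set (V d)) (φ : V d → V d') : Prop :=
  Set.InjOn φ K ∧ ∃ g : Fin 4 → Fin 4, Function.Bijective g ∧
    (∀ j, g (j + 2) = g j + 2) ∧
    ∀ x ∈ K, ∀ j : Fin 4, x + dirVec d j ∈ K →
      φ (x + dirVec d j) = φ x + dirVec d' (g j)

/-- The embedding of a syndrome under an embedding map `φ`. -/
noncomputable def embedSynd (d d' : ℕ) (s : V d → ZMod 2) (φ : V d → V d') :
    V d' → ZMod 2 :=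
  fun c' => @ite _ (∃ c, s c = 1 ∧ φ c = c') (Classical.propDecidable _) 1 0


-- ### Auxiliary development

def castP (d : ℕ) (p : ℤ × ℤ) : V d := ((p.1 : ZMod d), (p.2 : ZMod d))

lemma castP_add (d : ℕ) (p q : ℤ × ℤ) : castP d (p + q) = castP d p + castP d q := by
  simp [castP, Prod.ext_iff]

lemma zcast_inj {d : ℕ} (hd : 9 ≤ d) {x y : ℤ} (hx : |x| ≤ 4) (hy : |y| ≤ 4)
    (h : (x : ZMod d) = (y : ZMod d)) : x = y := by
  have h2 : ((x - y : ℤ) : ZMod d) = 0 := by push_cast; rw [h]; ring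
  have h3 : (d : ℤ) ∣ x - y := (ZMod.intCast_zmod_eq_zero_iff_dvd _ _).1 h2
  have h4 : x - y = 0 := Int.eq_zero_of_abs_lt_dvd h3 (by
    have : (9 : ℤ) ≤ d := by exact_mod_cast hd
    have hx' := abs_le.1 hx
    have hy' := abs_le.1 hy
    rw [abs_sub_lt_iff]; omega)
  omega

lemma castP_inj {d : ℕ} (hd : 9 ≤ d) {p q : ℤ × ℤ}
    (hp1 : |p.1| ≤ 4) (hp2 : |p.2| ≤ 4) (hq1 : |q.1| ≤ 4) (hq2 : |q.2| ≤ 4)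
    (h : castP d p = castP d q) : p = q := by
  rw [Prod.ext_iff] at h ⊢
  exact ⟨zcast_inj hd hp1 hq1 h.1, zcast_inj hd hp2 hq2 h.2⟩

def Ul : List (ℤ × ℤ) := [(1,0),(-1,0),(0,1),(0,-1)]
def Dl : List (ℤ × ℤ) := [(0,0),(4,0),(-4,0)]

lemma adj_step {d : ℕ} {v w : V d} (h : (Toric d).Adj v w) :
    ∃ u ∈ Ul, w = v + castP d u := by
  rcases (show v ≠ w ∧ (v - w = (1, 0) ∨ v - w = (-1, 0) ∨ v - w = (0, 1) ∨ v - w = (0, -1)) from h).2 with h1 | h1 | h1 | h1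
  · exact ⟨(-1,0), by simp [Ul], by
      have : w = v - (1,0) := by rw [← h1]; ring
      rw [this]; simp [castP, Prod.ext_iff]; try ring_nf⟩
  · exact ⟨(1,0), by simp [Ul], by
      have : w = v - (-1,0) := by rw [← h1]; ring
      rw [this]; simp [castP, Prod.ext_iff]; try ring_nf⟩
  · exact ⟨(0,-1), by simp [Ul], by
      have : w = v - (0,1) := by rw [← h1]; ring
      rw [this]; simp [castP, Prod.ext_iff]; try ring_nf⟩
  · exact ⟨(0,1), by simp [Ul], by
      have : w = v - (0,-1) := by rw [← h1]; ring
      rw [this]; simp [castP, Prod.ext_iff]; try ring_nf⟩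


/-- point j on the segment -/
def seg (d : ℕ) (j : ℕ) : V d := ((j : ZMod d), 0)
/-- edge j of the segment -/
def ed (d : ℕ) (j : ℕ) : Sym2 (V d) := s(seg d j, seg d (j+1))

lemma seg_inj {d : ℕ} (hd : 9 ≤ d) {j k : ℕ} (hj : j ≤ 4) (hk : k ≤ 4)
    (h : seg d j = seg d k) : j = k := by
  have h1 : ((j : ZMod d)) = (k : ZMod d) := congrArg Prod.fst h
  have h2 : (((j:ℤ) : ZMod d)) = ((k:ℤ) : ZMod d) := by push_cast; exact_mod_cast h1
  have := zcast_inj hd (x := (j:ℤ)) (y := (k:ℤ)) (by simp [abs_le]; omega) (by simp [abs_le]; omega) h2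
  exact_mod_cast this

lemma ed_mem_edgeSet {d : ℕ} (hd : 9 ≤ d) {j : ℕ} (hj : j ≤ 3) :
    ed d j ∈ (Toric d).edgeSet := by
  rw [ed, SimpleGraph.mem_edgeSet]
  constructor
  · intro h
    have := seg_inj hd (by omega) (by omega) h
    omega
  · right; left
    simp only [seg, Prod.mk_sub_mk, Prod.mk.injEq]
    constructor
    · push_cast; ring
    · ring

lemma eps4_eq_one_iff {d : ℕ} (q : (Toric d).edgeSet) :
    eps4 d q = 1 ↔ (q.val = ed d 0 ∨ q.val = ed d 1 ∨ q.val = ed d 2 ∨ q.val = ed d 3) := by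
  have hc : (s((((0 : ZMod d), (0 : ZMod d)) : V d), ((1, 0) : V d)) = ed d 0)
      ∧ (s((((1 : ZMod d), (0 : ZMod d)) : V d), ((2, 0) : V d)) = ed d 1)
      ∧ (s((((2 : ZMod d), (0 : ZMod d)) : V d), ((3, 0) : V d)) = ed d 2)
      ∧ (s((((3 : ZMod d), (0 : ZMod d)) : V d), ((4, 0) : V d)) = ed d 3) := by
    refine ⟨?_, ?_, ?_, ?_⟩ <;> · rw [ed]; congr 1 <;> simp [seg, Prod.ext_iff] <;> norm_cast
  rw [eps4, hc.1, hc.2.1, hc.2.2.1, hc.2.2.2]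
  split_ifs with h
  · simp [h]
  · simp [h]

lemma synd_eps4_support {d : ℕ} (hd : 9 ≤ d) (v : V d) (h : synd (eps4 d) v = 1) :
    v = seg d 0 ∨ v = seg d 4 := by
  by_contra hnot
  push_neg at hnot
  -- membership of v in ed d j forces v = seg d j' for some j'
  have hmem : ∀ j : ℕ, j ≤ 3 → v ∈ ed d j → v = seg d j ∨ v = seg d (j+1) := by
    intro j hj hv
    rw [ed, Sym2.mem_iff] at hv
    exact hv
  by_cases hseg : v = seg d 1 ∨ v = seg d 2 ∨ v = seg d 3
  · -- interior: the incident labeled edges are exactly two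
    obtain ⟨k, hk1, hk3, hv⟩ : ∃ k : ℕ, 1 ≤ k ∧ k ≤ 3 ∧ v = seg d k := by
      rcases hseg with h1 | h1 | h1
      exacts [⟨1, by omega, by omega, h1⟩, ⟨2, by omega, by omega, h1⟩, ⟨3, by omega, by omega, h1⟩]
    have hq1 : ed d (k-1) ∈ (Toric d).edgeSet := ed_mem_edgeSet hd (by omega)
    have hq2 : ed d k ∈ (Toric d).edgeSet := ed_mem_edgeSet hd (by omega)
    set q1 : (Toric d).edgeSet := ⟨ed d (k-1), hq1⟩
    set q2 : (Toric d).edgeSet := ⟨ed d k, hq2⟩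
    have hset : {q : (Toric d).edgeSet | eps4 d q = 1 ∧ v ∈ (q : Sym2 (V d))} = {q1, q2} := by
      ext q
      simp only [Set.mem_setOf_eq, Set.mem_insert_iff, Set.mem_singleton_iff]
      constructor
      · rintro ⟨he, hvq⟩
        rw [eps4_eq_one_iff] at he
        have : ∃ j : ℕ, j ≤ 3 ∧ q.val = ed d j := by
          rcases he with h1|h1|h1|h1
          exacts [⟨0, by omega, h1⟩, ⟨1, by omega, h1⟩, ⟨2, by omega, h1⟩, ⟨3, by omega, h1⟩]
        obtain ⟨j, hj, hqj⟩ := this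
        rw [hqj] at hvq
        rcases hmem j hj hvq with h1 | h1
        · -- v = seg d j so k = j, q = q2
          have hkj : k = j := seg_inj hd (by omega) (by omega) (by rw [← hv, h1])
          right; apply Subtype.ext; rw [hqj]; show ed d j = ed d k; rw [hkj]
        · have : k = j + 1 := seg_inj hd (by omega) (by omega) (by rw [← hv, h1])
          left; apply Subtype.ext; rw [hqj]; show ed d j = ed d (k-1); congr 1; omega
      · have hedor : ∀ j : ℕ, j ≤ 3 →
            (ed d j = ed d 0 ∨ ed d j = ed d 1 ∨ ed d j = ed d 2 ∨ ed d j = ed d 3) := by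
          intro j hj; interval_cases j <;> simp
        rintro (h1 | h1) <;> subst h1
        · refine ⟨?_, ?_⟩
          · rw [eps4_eq_one_iff]
            exact hedor (k-1) (by omega)
          · show v ∈ ed d (k-1)
            rw [ed, Sym2.mem_iff]; right
            rw [hv]; congr 1; omega
        · refine ⟨?_, ?_⟩
          · rw [eps4_eq_one_iff]
            exact hedor k (by omega)
          · show v ∈ ed d k
            rw [ed, Sym2.mem_iff]; left; exact hv
    have hne : q1 ≠ q2 := by
      intro he
      have : ed d (k-1) = ed d k := congrArg Subtype.val he
      rw [ed, ed, Sym2.eq_iff] at this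
      rcases this with ⟨h1, _⟩ | ⟨h1, h2⟩
      · have := seg_inj hd (by omega) (by omega) h1; omega
      · have := seg_inj hd (by omega) (by omega) h1; omega
    have hcard : Nat.card {q : (Toric d).edgeSet // eps4 d q = 1 ∧ v ∈ (q : Sym2 (V d))} = 2 := by
      have h2 : Nat.card ↥{q : (Toric d).edgeSet | eps4 d q = 1 ∧ v ∈ (q : Sym2 (V d))} = 2 := by
        rw [Nat.card_coe_set_eq, hset]; exact Set.ncard_pair hne
      exact h2
    rw [synd, hcard] at h
    exact absurd h (by decide)
  · -- v not on the segment at all: no incident labeled edge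
    push_neg at hseg
    have hempty : IsEmpty {q : (Toric d).edgeSet // eps4 d q = 1 ∧ v ∈ (q : Sym2 (V d))} := by
      constructor
      rintro ⟨q, he, hvq⟩
      rw [eps4_eq_one_iff] at he
      have : ∃ j : ℕ, j ≤ 3 ∧ q.val = ed d j := by
        rcases he with h1|h1|h1|h1
        exacts [⟨0, by omega, h1⟩, ⟨1, by omega, h1⟩, ⟨2, by omega, h1⟩, ⟨3, by omega, h1⟩]
      obtain ⟨j, hj, hqj⟩ := this
      rw [hqj] at hvq
      rcases hmem j hj hvq with h1 | h1 <;>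
      · have hj' : ∃ j' : ℕ, j' ≤ 4 ∧ v = seg d j' := by
          first
          | exact ⟨j, by omega, h1⟩
          | exact ⟨j+1, by omega, h1⟩
        obtain ⟨j', hj'4, hvj'⟩ := hj'
        interval_cases j' <;> simp_all [hnot.1, hnot.2, hseg.1, hseg.2.1, hseg.2.2]
    have hcard : Nat.card {q : (Toric d).edgeSet // eps4 d q = 1 ∧ v ∈ (q : Sym2 (V d))} = 0 :=
      Nat.card_of_isEmpty
    rw [synd, hcard] at h
    exact absurd h (by decide)


def Sprop (dd : ℕ) (v : V dd) : Prop := v = seg dd 0 ∨ v = seg dd 4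

-- ## cpl lemmas
lemma cpl_comm {d : ℕ} : ∀ (l1 l2 : List (V d)), cpl l1 l2 = cpl l2 l1 := by
  intro l1
  induction l1 with
  | nil => intro l2; cases l2 <;> rfl
  | cons x xs ih =>
    intro l2
    cases l2 with
    | nil => rfl
    | cons y ys =>
      by_cases h : x = y
      · subst h; simp [cpl, ih]
      · rw [cpl, cpl, if_neg h, if_neg (fun hyx => h hyx.symm)]

lemma cpl_le_left {d : ℕ} : ∀ (l1 l2 : List (V d)), cpl l1 l2 ≤ l1.length := by
  intro l1
  induction l1 with
  | nil => intro l2; cases l2 <;> simp [cpl]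
  | cons x xs ih =>
    intro l2
    cases l2 with
    | nil => simp [cpl]
    | cons y ys =>
      by_cases h : x = y
      · simp only [cpl, if_pos h, List.length_cons]
        exact Nat.add_le_add_right (ih ys) 1
      · simp [cpl, if_neg h]

lemma cpl_prefix {d : ℕ} : ∀ (l1 l2 : List (V d)), cpl l1 l2 = l1.length → l1 <+: l2 := by
  intro l1
  induction l1 with
  | nil => intro l2 _; exact List.nil_prefix
  | cons x xs ih =>
    intro l2 h
    cases l2 with
    | nil => simp [cpl] at h
    | cons y ys =>
      by_cases hxy : x = y
      · subst hxy
        rw [cpl, if_pos rfl, List.length_cons] at h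
        have := ih ys (by omega)
        exact List.cons_prefix_cons.mpr ⟨rfl, this⟩
      · rw [cpl, if_neg hxy] at h
        simp at h

lemma cpl_agree {d : ℕ} : ∀ (l1 l2 : List (V d)) (j : ℕ), j < cpl l1 l2 →
    l1.getD j 0 = l2.getD j 0 := by
  intro l1
  induction l1 with
  | nil => intro l2 j h; simp [cpl] at h
  | cons x xs ih =>
    intro l2 j h
    cases l2 with
    | nil => simp [cpl] at h
    | cons y ys =>
      by_cases hxy : x = y
      · subst hxy
        rw [cpl, if_pos rfl] at h
        cases j with
        | zero => rfl
        | succ j' => simpa using ih ys j' (by omega)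
      · rw [cpl, if_neg hxy] at h; omega

lemma cpl_diverge {d : ℕ} : ∀ (l1 l2 : List (V d)), cpl l1 l2 < l1.length →
    cpl l1 l2 < l2.length → l1.getD (cpl l1 l2) 0 ≠ l2.getD (cpl l1 l2) 0 := by
  intro l1
  induction l1 with
  | nil => intro l2 h1 _; simp [cpl] at h1
  | cons x xs ih =>
    intro l2 h1 h2
    cases l2 with
    | nil => simp at h2
    | cons y ys =>
      by_cases hxy : x = y
      · subst hxy
        rw [cpl, if_pos rfl] at h1 h2 ⊢
        simpa using ih ys (by simpa using h1) (by simpa using h2)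
      · rw [cpl, if_neg hxy] at h1 h2 ⊢
        simpa using hxy

-- ## accessor lemmas
lemma prefix_getD {d : ℕ} {l1 l2 : List (V d)} (h : l1 <+: l2) {j : ℕ} (hj : j < l1.length) :
    l1.getD j 0 = l2.getD j 0 := by
  rw [List.getD_eq_getElem _ _ hj, List.getD_eq_getElem _ _ (lt_of_lt_of_le hj h.length_le)]
  exact h.getElem hj

lemma chain_step {d : ℕ} {l : List (V d)} (h : l.Chain' (Toric d).Adj) {j : ℕ}
    (hj : j + 1 < l.length) : ∃ u ∈ Ul, l.getD (j+1) 0 = l.getD j 0 + castP d u := by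
  rw [List.getD_eq_getElem _ _ hj, List.getD_eq_getElem _ _ (by omega)]
  have hadj := List.isChain_iff_getElem.mp h j (by omega)
  exact adj_step hadj

lemma wwr_ne {d : ℕ} {l : List (V d)} (h : IsWWR d l) {j : ℕ} (hj : j + 2 < l.length) :
    l.getD j 0 ≠ l.getD (j+2) 0 := by
  have := h.2 j hj
  rw [List.getElem?_eq_getElem (by omega : j < l.length), List.getElem?_eq_getElem hj] at this
  rw [List.getD_eq_getElem _ _ (by omega), List.getD_eq_getElem _ _ hj]
  exact fun he => this (by rw [he])

-- ## decision lemmas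
lemma ul_bound : ∀ u ∈ Ul, |u.1| ≤ 1 ∧ |u.2| ≤ 1 := by decide
lemma dl_bound : ∀ p ∈ Dl, |p.1| ≤ 4 ∧ |p.2| ≤ 4 := by decide
lemma C3 : ∀ u ∈ Ul, ∀ s ∈ Dl, u ≠ s := by decide
lemma C2 : ∀ u ∈ Ul, ∀ v ∈ Ul, ∀ s ∈ Dl, u + v = s → s = (0,0) := by decide
set_option maxRecDepth 10000 in
lemma C1 : ∀ u1 ∈ Ul, ∀ u2 ∈ Ul, ∀ u3 ∈ Ul, ∀ u4 ∈ Ul, ∀ v3 ∈ Ul, ∀ v4 ∈ Ul,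
    (u1+u2+u3+u4) ∈ Dl → (u1+u2+v3+v4) ∈ Dl →
    u1+u2 ≠ 0 → u2+u3 ≠ 0 → u3+u4 ≠ 0 → u2+v3 ≠ 0 → v3+v4 ≠ 0 → u3 ≠ v3 → False := by
  decide

lemma sdiff {d : ℕ} {x y : V d} (hx : Sprop d x) (hy : Sprop d y) :
    ∃ dd ∈ Dl, y = x + castP d dd := by
  have h04 : seg d 4 = seg d 0 + castP d (4,0) := by
    simp [seg, castP, Prod.ext_iff]
  have h40 : seg d 0 = seg d 4 + castP d (-4,0) := by
    simp [seg, castP, Prod.ext_iff]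
  rcases hx with hx | hx <;> rcases hy with hy | hy <;> subst hx <;> subst hy
  · exact ⟨(0,0), by simp [Dl], by simp [castP]⟩
  · exact ⟨(4,0), by simp [Dl], h04⟩
  · exact ⟨(-4,0), by simp [Dl], h40⟩
  · exact ⟨(0,0), by simp [Dl], by simp [castP]⟩

lemma castP_zero (d : ℕ) : castP d 0 = 0 := by
  show castP d (0,0) = ((0 : ZMod d), (0 : ZMod d))
  simp [castP]
lemma castP_zero' (d : ℕ) : castP d ((0,0) : ℤ × ℤ) = 0 := castP_zero d


-- ## the key lemma
lemma key {d : ℕ} (hd : 9 ≤ d) (B P Q : List (V d))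
    (hB : IsWWR d B) (hP : IsWWR d P) (hQ : IsWWR d Q)
    (hBlen : 6 ≤ B.length) (hPlen : 2 ≤ P.length)
    (hQP : Q.length = P.length)
    (hw0 : Sprop d (B.getD (B.length - 5) 0))
    (hw4 : Sprop d (B.getD (B.length - 1) 0))
    (hvP : Sprop d (P.getD (P.length - 1) 0))
    (hvQ : Sprop d (Q.getD (Q.length - 1) 0))
    (hcpl : cpl P Q = P.length - 2)
    (hpre : B <+: P)
    (hm : P.length - 2 ≤ B.length) : False := by
  have hml : B.length ≤ P.length := hpre.length_le
  have habs : ∀ p : ℤ × ℤ, p ∈ Ul → |p.1| ≤ 4 ∧ |p.2| ≤ 4 := by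
    intro p hp
    obtain ⟨h1, h2⟩ := ul_bound p hp
    exact ⟨h1.trans (by norm_num), h2.trans (by norm_num)⟩
  have hcast_mem : ∀ (x y : V d) (p : ℤ × ℤ), Sprop d x → Sprop d y →
      |p.1| ≤ 4 → |p.2| ≤ 4 → y = x + castP d p → p ∈ Dl := by
    intro x y p hx hy hb1 hb2 heq
    obtain ⟨dd, hdd, hdeq⟩ := sdiff hx hy
    have hcc : castP d p = castP d dd := add_left_cancel (heq.symm.trans hdeq)
    have hddb := dl_bound dd hdd
    have := castP_inj hd hb1 hb2 hddb.1 hddb.2 hcc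
    rwa [this]
  rcases (by omega : B.length = P.length ∨ B.length = P.length - 1 ∨
      B.length = P.length - 2) with hc | hc | hc
  · -- case B.length = P.length : B = P, full geometric argument
    have hBP : B = P := hpre.eq_of_length hc
    obtain ⟨u1, hu1, he1⟩ := chain_step hB.1 (show (B.length-5) + 1 < B.length by omega)
    obtain ⟨u2, hu2, he2⟩ := chain_step hB.1 (show (B.length-4) + 1 < B.length by omega)
    obtain ⟨u3, hu3, he3⟩ := chain_step hB.1 (show (B.length-3) + 1 < B.length by omega)
    obtain ⟨u4, hu4, he4⟩ := chain_step hB.1 (show (B.length-2) + 1 < B.length by omega)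
    rw [show B.length-5+1 = B.length-4 by omega] at he1
    rw [show B.length-4+1 = B.length-3 by omega] at he2
    rw [show B.length-3+1 = B.length-2 by omega] at he3
    rw [show B.length-2+1 = B.length-1 by omega] at he4
    obtain ⟨v3, hv3, hf3⟩ := chain_step hQ.1 (show (B.length-3) + 1 < Q.length by omega)
    obtain ⟨v4, hv4, hf4⟩ := chain_step hQ.1 (show (B.length-2) + 1 < Q.length by omega)
    rw [show B.length-3+1 = B.length-2 by omega] at hf3
    rw [show B.length-2+1 = B.length-1 by omega] at hf4
    have hag : ∀ j, j < P.length - 2 → B.getD j 0 = Q.getD j 0 := by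
      intro j hj
      rw [hBP]; exact cpl_agree P Q j (by omega)
    have hag3 : B.getD (B.length-3) 0 = Q.getD (B.length-3) 0 := hag _ (by omega)
    have hdiv : B.getD (B.length-2) 0 ≠ Q.getD (B.length-2) 0 := by
      rw [hBP]
      have := cpl_diverge P Q (by rw [hcpl]; omega) (by rw [hcpl]; omega)
      rwa [hcpl] at this
    rw [← hag3] at hf3
    have hsum1 : B.getD (B.length-1) 0 = B.getD (B.length-5) 0 + castP d (u1+u2+u3+u4) := by
      rw [he4, he3, he2, he1, castP_add, castP_add, castP_add]; ring
    have hsum2 : Q.getD (B.length-1) 0 = B.getD (B.length-5) 0 + castP d (u1+u2+v3+v4) := by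
      rw [hf4, hf3, he2, he1, castP_add, castP_add, castP_add]; ring
    have hB1 : |(u1+u2+u3+u4).1| ≤ 4 ∧ |(u1+u2+u3+u4).2| ≤ 4 := by
      have b1 := ul_bound u1 hu1; have b2 := ul_bound u2 hu2
      have b3 := ul_bound u3 hu3; have b4 := ul_bound u4 hu4
      simp only [Prod.fst_add, Prod.snd_add, abs_le] at *
      omega
    have hB2 : |(u1+u2+v3+v4).1| ≤ 4 ∧ |(u1+u2+v3+v4).2| ≤ 4 := by
      have b1 := ul_bound u1 hu1; have b2 := ul_bound u2 hu2
      have b3 := ul_bound v3 hv3; have b4 := ul_bound v4 hv4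
      simp only [Prod.fst_add, Prod.snd_add, abs_le] at *
      omega
    have hmem1 : (u1+u2+u3+u4) ∈ Dl := hcast_mem _ _ _ hw0 hw4 hB1.1 hB1.2 hsum1
    have hvQ' : Sprop d (Q.getD (B.length - 1) 0) := by
      rw [show B.length - 1 = Q.length - 1 by omega]; exact hvQ
    have hmem2 : (u1+u2+v3+v4) ∈ Dl := hcast_mem _ _ _ hw0 hvQ' hB2.1 hB2.2 hsum2
    have hne1 : u1 + u2 ≠ 0 := by
      intro h0
      have hstep : B.getD (B.length-3) 0 = B.getD (B.length-5) 0 + castP d (u1+u2) := by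
        rw [he2, he1, castP_add]; ring
      rw [h0, castP_zero, add_zero] at hstep
      exact wwr_ne hB (show (B.length-5) + 2 < B.length by omega)
        (by rw [show B.length-5+2 = B.length-3 by omega, hstep])
    have hne2 : u2 + u3 ≠ 0 := by
      intro h0
      have hstep : B.getD (B.length-2) 0 = B.getD (B.length-4) 0 + castP d (u2+u3) := by
        rw [he3, he2, castP_add]; ring
      rw [h0, castP_zero, add_zero] at hstep
      exact wwr_ne hB (show (B.length-4) + 2 < B.length by omega)
        (by rw [show B.length-4+2 = B.length-2 by omega, hstep])
    have hne3 : u3 + u4 ≠ 0 := by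
      intro h0
      have hstep : B.getD (B.length-1) 0 = B.getD (B.length-3) 0 + castP d (u3+u4) := by
        rw [he4, he3, castP_add]; ring
      rw [h0, castP_zero, add_zero] at hstep
      exact wwr_ne hB (show (B.length-3) + 2 < B.length by omega)
        (by rw [show B.length-3+2 = B.length-1 by omega, hstep])
    have hne4 : u2 + v3 ≠ 0 := by
      intro h0
      have hstep : Q.getD (B.length-2) 0 = B.getD (B.length-4) 0 + castP d (u2+v3) := by
        rw [hf3, he2, castP_add]; ring
      rw [h0, castP_zero, add_zero] at hstep
      have hQne := wwr_ne hQ (show (B.length-4) + 2 < Q.length by omega)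
      rw [show B.length-4+2 = B.length-2 by omega] at hQne
      exact hQne (by rw [← hag _ (by omega : B.length - 4 < P.length - 2), hstep])
    have hne5 : v3 + v4 ≠ 0 := by
      intro h0
      have hstep : Q.getD (B.length-1) 0 = B.getD (B.length-3) 0 + castP d (v3+v4) := by
        rw [hf4, hf3, castP_add]; ring
      rw [h0, castP_zero, add_zero] at hstep
      have hQne := wwr_ne hQ (show (B.length-3) + 2 < Q.length by omega)
      rw [show B.length-3+2 = B.length-1 by omega] at hQne
      exact hQne (by rw [← hag _ (by omega : B.length - 3 < P.length - 2), hstep])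
    have hne6 : u3 ≠ v3 := fun h0 => hdiv (by rw [he3, hf3, h0])
    exact C1 u1 hu1 u2 hu2 u3 hu3 u4 hu4 v3 hv3 v4 hv4 hmem1 hmem2 hne1 hne2 hne3 hne4 hne5 hne6
  · -- case B.length = P.length - 1
    obtain ⟨u, hu, he⟩ := chain_step hP.1 (show (B.length-1) + 1 < P.length by omega)
    rw [show B.length-1+1 = P.length-1 by omega] at he
    rw [← prefix_getD hpre (show B.length - 1 < B.length by omega)] at he
    obtain ⟨b1, b2⟩ := habs u hu
    have : u ∈ Dl := hcast_mem _ _ _ hw4 hvP b1 b2 he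
    exact C3 u hu u this rfl
  · -- case B.length = P.length - 2
    obtain ⟨u, hu, he1⟩ := chain_step hP.1 (show (B.length-1) + 1 < P.length by omega)
    obtain ⟨v, hv, he2⟩ := chain_step hP.1 (show B.length + 1 < P.length by omega)
    rw [show B.length-1+1 = B.length by omega] at he1
    rw [show B.length+1 = P.length-1 by omega] at he2
    rw [← prefix_getD hpre (show B.length - 1 < B.length by omega)] at he1
    have hsum : P.getD (P.length-1) 0 = B.getD (B.length-1) 0 + castP d (u + v) := by
      rw [he2, he1, castP_add]; ring
    have hbd : |(u+v).1| ≤ 4 ∧ |(u+v).2| ≤ 4 := by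
      have b1 := ul_bound u hu; have b2 := ul_bound v hv
      simp only [Prod.fst_add, Prod.snd_add, abs_le] at *
      omega
    have hmem : (u + v) ∈ Dl := hcast_mem _ _ _ hw4 hvP hbd.1 hbd.2 hsum
    have h0 : u + v = (0,0) := C2 u hu v hv _ hmem rfl
    have heq : P.getD (P.length-1) 0 = B.getD (B.length-1) 0 := by
      rw [hsum, h0, castP_zero', add_zero]
    have hPne := wwr_ne hP (show (B.length-1) + 2 < P.length by omega)
    rw [show B.length-1+2 = P.length-1 by omega] at hPne
    exact hPne (by rw [← prefix_getD hpre (show B.length - 1 < B.length by omega), heq])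



lemma vcheck_getD (l : List (V d)) (h : 1 ≤ l.length) :
    vcheck l = l.getD (l.length - 1) 0 := by
  rw [vcheck, List.getLastD_eq_getLast?, List.getLast?_eq_getElem?, List.getD_eq_getElem?_getD]

/-- **Corollary (I-link bottom endpoint avoids Λ-links).** -/
theorem ilink_bottom_avoids_lambda (d : ℕ) (hd : 9 ≤ d) (c b : V d)
    (hcb : (Toric d).Adj c b) (hc : synd (eps4 d) c = 1) (i : ℕ)
    (L : Link d c b i (synd (eps4 d))) (hI : L.IsI)
    (hbot : L.endB.length = L.endA.length + 4) :
    ∀ L' : Link d c b i (synd (eps4 d)), L'.IsLambda →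
      ¬ OnPathVertexVV L'.endA L'.endB L.endB := by
  intro L' hlam hOn
  obtain ⟨hprop, hlen4, -, -⟩ := hI
  obtain ⟨hAv, hBv⟩ := hprop
  obtain ⟨hAwwr, hAstart, hA2, hAle⟩ := id hAv
  obtain ⟨hBwwr, hBstart, hB2, hBle⟩ := id hBv
  have hstripA : stripD i L.endA = L.endA := by rw [stripD, if_neg (by omega)]
  have hstripB : stripD i L.endB = L.endB := by rw [stripD, if_neg (by omega)]
  have hlenAB : treeDist L.endA L.endB = 4 := by
    have h4 := hlen4
    rw [Link.len, hstripA, hstripB, if_neg (show ¬ L.endA.length = i + 2 by omega),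
      if_neg (show ¬ L.endB.length = i + 2 by omega), add_zero, add_zero] at h4
    exact h4
  have hpreAB : L.endA <+: L.endB := by
    rw [treeDist] at hlenAB
    by_cases ht : L.endA.take 2 = L.endB.take 2
    · rw [if_pos ht] at hlenAB
      have hle := cpl_le_left L.endA L.endB
      exact cpl_prefix _ _ (by omega)
    · rw [if_neg ht] at hlenAB
      exact absurd hlenAB (by omega)
  obtain ⟨hprop', hlamlen, -, hll⟩ := hlam
  obtain ⟨hPv, hQv⟩ := hprop'
  obtain ⟨hPwwr, hPstart, hP2, hPle⟩ := id hPv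
  obtain ⟨hQwwr, hQstart, hQ2, hQle⟩ := id hQv
  have hstripP : stripD i L'.endA = L'.endA := by rw [stripD, if_neg (by omega)]
  have hstripQ : stripD i L'.endB = L'.endB := by rw [stripD, if_neg (by omega)]
  have hlenPQ : treeDist L'.endA L'.endB = 4 := by
    have h4 := hlamlen
    rw [Link.len, hstripP, hstripQ, if_neg (show ¬ L'.endA.length = i + 2 by omega),
      if_neg (show ¬ L'.endB.length = i + 2 by omega), add_zero, add_zero] at h4
    exact h4
  have htake : L'.endA.take 2 = L'.endB.take 2 := by
    by_contra ht
    rw [treeDist, if_neg ht] at hlenPQ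
    omega
  have hcplPQ : cpl L'.endA L'.endB = L'.endA.length - 2 := by
    rw [treeDist, if_pos htake] at hlenPQ
    have h1 := cpl_le_left L'.endA L'.endB
    omega
  rw [OnPathVertexVV, if_pos htake] at hOn
  obtain ⟨hpre2, hmm⟩ := hOn
  rw [hcplPQ] at hmm
  -- syndromes of the four relevant checks
  have hSB : Sprop d (L.endB.getD (L.endB.length - 1) 0) := by
    rw [← vcheck_getD _ (by omega)]
    exact synd_eps4_support hd _ (L.hBu hBv)
  have hSA : Sprop d (L.endB.getD (L.endB.length - 5) 0) := by
    have h1 : vcheck L.endA = L.endA.getD (L.endA.length - 1) 0 := vcheck_getD _ (by omega)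
    have h2 : L.endA.getD (L.endA.length - 1) 0 = L.endB.getD (L.endA.length - 1) 0 :=
      prefix_getD hpreAB (by omega)
    have h3 : L.endA.length - 1 = L.endB.length - 5 := by omega
    have h5 := synd_eps4_support hd _ (L.hAu hAv)
    rw [h1, h3] at h5
    rw [h3] at h2
    rw [h2] at h5
    exact h5
  have hSP : Sprop d (L'.endA.getD (L'.endA.length - 1) 0) := by
    rw [← vcheck_getD _ (by omega)]
    exact synd_eps4_support hd _ (L'.hAu hPv)
  have hSQ : Sprop d (L'.endB.getD (L'.endB.length - 1) 0) := by
    rw [← vcheck_getD _ (by omega)]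
    exact synd_eps4_support hd _ (L'.hBu hQv)
  rcases hpre2 with hpre2 | hpre2
  · exact key hd L.endB L'.endA L'.endB hBwwr hPwwr hQwwr (by omega) (by omega)
      (by omega) hSA hSB hSP hSQ hcplPQ hpre2 (by omega)
  · exact key hd L.endB L'.endB L'.endA hBwwr hQwwr hPwwr (by omega) (by omega)
      (by omega) hSA hSB hSQ hSP
      (by rw [cpl_comm, hcplPQ]; omega) hpre2 (by omega)

end ToricMS
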